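/- arXiv:1911.05398 — 2 statements merged into one kernel-verified Lean document; each statement's English description precedes it below -/
import Mathlib

section
/- Let J ≥ 3, h = 1/J, and let V^h_{∂0} be the space of continuous functions η : Ī → ℝ² that are affine on each subinterval [q_{j−1}, q_j], q_j = jh, where either I = ℝ/ℤ (so functions are 1-periodic and no boundary condition is imposed) or I = (0,1) and η·e₁ = 0 at ρ = 0 and ρ = 1. Let Δt > 0 and suppose X^m ∈ V^h_{∂0} satisfies X^m·e₁ > 0 in I and |X^m_ρ| > 0 in I (the derivative taken piecewise). Then there exists a unique X^{m+1} ∈ V^h_{∂0} such that ((X^m·e₁) (X^{m+1}−X^m)/Δt, η |X^m_ρ|²) + ((X^m·e₁) X^{m+1}_ρ, η_ρ) + (η·e₁, |X^m_ρ|²) = 0 for all η ∈ V^h_{∂0}. -/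
/-!
Functions in `V^h_{∂0}` are determined on `[0,1]` by their nodal values, through the hat-function
interpolant, and on each open piece their derivative is the constant slope of the nodal data.
Splitting the integral over the pieces therefore turns the scheme into a linear system
`a(X^{m+1}, η) = -ℓ(η)` on the finite-dimensional space of nodal vectors satisfying the boundary
conditions. On a piece the integrand of `a(u, u)` is `(X^m·e₁) (|u|² |X^m_ρ|² / Δt + |u_ρ|²)`,
which is positive in the interior of the piece unless both nodal values of `u` there vanish,
because `X^m·e₁ > 0` and `X^m_ρ ≠ 0`. So `a` is positive definite, and a positive definite
bilinear form on a finite-dimensional space represents every linear functional in exactly one way.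
-/

open MeasureTheory Real Set
open scoped RealInnerProductSpace

noncomputable section

abbrev E2 := EuclideanSpace ℝ (Fin 2)

def e1 : E2 := EuclideanSpace.single 0 1

/-- The finite element space `V^h_{∂0}`: continuous functions on `Ī = [0,1]` that are
affine on each subinterval `[j/J, (j+1)/J]`, and which are either periodic
(`f 0 = f 1`, case `I = ℝ/ℤ`) or satisfy `f·e₁ = 0` at both endpoints
(case `I = (0,1)`). -/
def Vh0 (J : ℕ) (periodic : Bool) : Set (ℝ → E2) :=
  {f | ContinuousOn f (Set.Icc 0 1) ∧
    (∀ j : ℕ, j < J → ∃ a b : E2,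
      ∀ ρ ∈ Set.Icc ((j : ℝ)/J) (((j : ℝ)+1)/J), f ρ = a + ρ • b) ∧
    (if periodic then f 0 = f 1 else (⟪f 0, e1⟫ = 0 ∧ ⟪f 1, e1⟫ = 0))}

/-- The scheme form: `((X^m·e₁) (X^{m+1}−X^m)/Δt, η |X^m_ρ|²) +
((X^m·e₁) X^{m+1}_ρ, η_ρ) + (η·e₁, |X^m_ρ|²)`. -/
def Bform (Δt : ℝ) (Xm Xnew η : ℝ → E2) : ℝ :=
  ∫ ρ in (0:ℝ)..1,
    (⟪Xm ρ, e1⟫ * ⟪Δt⁻¹ • (Xnew ρ - Xm ρ), η ρ⟫ * ‖deriv Xm ρ‖^2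
      + ⟪Xm ρ, e1⟫ * ⟪deriv Xnew ρ, deriv η ρ⟫
      + ⟪η ρ, e1⟫ * ‖deriv Xm ρ‖^2)

section IntervalIntegralForms

variable {M : Type*} [AddCommGroup M] [Module ℝ M]

def intervalIntegralDual (a b : ℝ) (ℓ : ℝ → Module.Dual ℝ M)
    (hℓ : ∀ v, IntervalIntegrable (fun ρ => ℓ ρ v) volume a b) : Module.Dual ℝ M where
  toFun v := ∫ ρ in a..b, ℓ ρ v
  map_add' v w := by
    simp only [map_add]
    exact intervalIntegral.integral_add (hℓ v) (hℓ w)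
  map_smul' c v := by
    simp only [map_smul, smul_eq_mul, RingHom.id_apply]
    exact intervalIntegral.integral_const_mul c _

def intervalIntegralBilin (a b : ℝ) (B : ℝ → LinearMap.BilinForm ℝ M)
    (hB : ∀ u v, IntervalIntegrable (fun ρ => B ρ u v) volume a b) :
    LinearMap.BilinForm ℝ M where
  toFun u := intervalIntegralDual a b (fun ρ => B ρ u) (hB u)
  map_add' u w := by
    ext v
    simp only [intervalIntegralDual, map_add, LinearMap.add_apply, LinearMap.coe_mk,
      AddHom.coe_mk]
    exact intervalIntegral.integral_add (hB u v) (hB w v)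
  map_smul' c u := by
    ext v
    simp only [intervalIntegralDual, map_smul, LinearMap.smul_apply, smul_eq_mul,
      LinearMap.coe_mk, AddHom.coe_mk, RingHom.id_apply]
    exact intervalIntegral.integral_const_mul c _

lemma intervalIntegralDual_apply (a b : ℝ) (ℓ : ℝ → Module.Dual ℝ M)
    (hℓ : ∀ v, IntervalIntegrable (fun ρ => ℓ ρ v) volume a b) (v : M) :
    intervalIntegralDual a b ℓ hℓ v = ∫ ρ in a..b, ℓ ρ v := rfl

lemma intervalIntegralBilin_apply (a b : ℝ) (B : ℝ → LinearMap.BilinForm ℝ M)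
    (hB : ∀ u v, IntervalIntegrable (fun ρ => B ρ u v) volume a b) (u v : M) :
    intervalIntegralBilin a b B hB u v = ∫ ρ in a..b, B ρ u v := rfl

end IntervalIntegralForms

lemma LinearMap.BilinForm.existsUnique_apply_eq {K V : Type*} [Field K] [AddCommGroup V]
    [Module K V] [FiniteDimensional K V] (B : LinearMap.BilinForm K V)
    (hB : ∀ v, B v v = 0 → v = 0) (f : Module.Dual K V) : ∃! u, ∀ v, B u v = f v := by
  have hnd : B.Nondegenerate := .ofSeparatingLeft fun u hu => hB u (hu u)
  refine ⟨(B.toDual hnd).symm f, LinearMap.BilinForm.apply_toDual_symm_apply f, ?_⟩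
  intro u hu
  rw [LinearEquiv.eq_symm_apply]
  ext v
  exact (LinearMap.BilinForm.toDual_def hnd).trans (hu v)

lemma Fin.exists_eq_castSucc_or_eq_succ {n : ℕ} (hn : n ≠ 0) (i : Fin (n + 1)) :
    ∃ j : Fin n, i = j.castSucc ∨ i = j.succ := by
  cases i using Fin.cases with
  | zero => exact ⟨⟨0, Nat.pos_of_ne_zero hn⟩, Or.inl rfl⟩
  | succ j => exact ⟨j, Or.inr rfl⟩

lemma one_le_abs_sub_natCast {t : ℝ} {i j : ℕ} (ht : t ∈ Icc (j : ℝ) (j + 1)) (hij : i ≠ j)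
    (hij' : i ≠ j + 1) : 1 ≤ |t - i| := by
  rcases lt_or_gt_of_ne hij with h | h
  · have : (i : ℝ) + 1 ≤ j := by exact_mod_cast h
    exact le_abs.mpr (Or.inl (by linarith [ht.1]))
  · have : (j : ℝ) + 2 ≤ i := by exact_mod_cast (by omega : j + 2 ≤ i)
    exact le_abs.mpr (Or.inr (by linarith [ht.2]))

lemma natCast_div_lt_succ_div {J : ℕ} (hJ : J ≠ 0) (j : ℕ) : (j : ℝ) / J < (j + 1) / J := by
  have : (0 : ℝ) < J := by positivity
  gcongr; linarith

lemma integral_unitInterval_eq_sum_pieces {J : ℕ} (hJ : J ≠ 0) {f : ℝ → ℝ}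
    {g : Fin J → ℝ → ℝ}
    (hg : ∀ j : Fin J, IntervalIntegrable (g j) volume (j / J : ℝ) ((j + 1) / J))
    (hfg : ∀ j : Fin J, EqOn f (g j) (Ioo (j / J : ℝ) ((j + 1) / J))) :
    ∫ ρ in (0 : ℝ)..1, f ρ = ∑ j : Fin J, ∫ ρ in (j / J : ℝ)..((j + 1) / J), g j ρ := by
  have hle (j : ℕ) := (natCast_div_lt_succ_div hJ j).le
  have hsum := intervalIntegral.sum_integral_adjacent_intervals (μ := volume) (f := f)
    (a := fun k : ℕ => (k : ℝ) / J) (n := J) fun k hk => by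
      simpa using (hg ⟨k, hk⟩).congr_uIoo (uIoo_of_le (hle k) ▸ (hfg ⟨k, hk⟩).symm)
  simp only [Nat.cast_zero, zero_div, div_self (Nat.cast_ne_zero.mpr hJ : (J : ℝ) ≠ 0),
    Nat.cast_add, Nat.cast_one] at hsum
  rw [← hsum, ← Fin.sum_univ_eq_sum_range (fun k => ∫ ρ in (k / J : ℝ)..((k + 1) / J), f ρ)]
  exact Finset.sum_congr rfl fun j _ =>
    intervalIntegral.integral_congr_Ioo_of_le (hle j) (hfg j)

namespace P1

variable {J : ℕ}

def hat (J i : ℕ) (ρ : ℝ) : ℝ := max 0 (1 - |ρ * J - i|)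

@[fun_prop] lemma continuous_hat (J i : ℕ) : Continuous (hat J i) := by
  unfold hat; fun_prop

def interp (J : ℕ) : (Fin (J + 1) → E2) →ₗ[ℝ] ℝ → E2 where
  toFun u ρ := ∑ i : Fin (J + 1), hat J i ρ • u i
  map_add' u v := by ext1 ρ; simp [smul_add, Finset.sum_add_distrib]
  map_smul' c u := by ext1 ρ; simp [Finset.smul_sum, smul_comm c]

lemma interp_apply (u : Fin (J + 1) → E2) (ρ : ℝ) :
    interp J u ρ = ∑ i : Fin (J + 1), hat J i ρ • u i := rfl

@[fun_prop] lemma continuous_interp (u : Fin (J + 1) → E2) : Continuous (interp J u) := by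
  show Continuous fun ρ => ∑ i : Fin (J + 1), hat J i ρ • u i
  fun_prop

def pieceSlope (J : ℕ) (j : Fin J) : (Fin (J + 1) → E2) →ₗ[ℝ] E2 :=
  (J : ℝ) • (LinearMap.proj (R := ℝ) (φ := fun _ => E2) j.succ - LinearMap.proj j.castSucc)

lemma pieceSlope_apply (j : Fin J) (u : Fin (J + 1) → E2) :
    pieceSlope J j u = (J : ℝ) • (u j.succ - u j.castSucc) := rfl

lemma mem_piece_iff (hJ : J ≠ 0) {j : ℕ} {ρ : ℝ} :
    ρ ∈ Icc ((j : ℝ) / J) ((j + 1) / J) ↔ ρ * J ∈ Icc (j : ℝ) (j + 1) := by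
  have hJR : (0 : ℝ) < J := by positivity
  simp only [mem_Icc, div_le_iff₀ hJR, le_div_iff₀ hJR]

lemma interp_eq_on_piece (hJ : J ≠ 0) (u : Fin (J + 1) → E2) (j : Fin J) {ρ : ℝ}
    (hρ : ρ ∈ Icc ((j : ℝ) / J) ((j + 1) / J)) :
    interp J u ρ = u j.castSucc + (ρ - j / J) • pieceSlope J j u := by
  have ht := (mem_piece_iff hJ).mp hρ
  have hne : j.castSucc ≠ j.succ := Fin.castSucc_lt_succ.ne
  rw [interp_apply, Fintype.sum_eq_add _ _ hne fun i hi => ?_]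
  · have h₀ : hat J j.castSucc ρ = 1 - (ρ * J - j) := by
      simp only [hat, Fin.val_castSucc, abs_of_nonneg (sub_nonneg.mpr ht.1)]
      exact max_eq_right (by linarith [ht.2])
    have h₁ : hat J j.succ ρ = ρ * J - j := by
      simp only [hat, Fin.val_succ, Nat.cast_add, Nat.cast_one]
      rw [abs_of_nonpos (by linarith [ht.2]), max_eq_right (by linarith [ht.1])]
      ring
    have hscale : (ρ - j / J) * J = ρ * J - j := by field_simp
    rw [h₀, h₁, pieceSlope_apply, smul_smul, hscale]
    module
  · have hi₀ : (i : ℕ) ≠ j := fun h => hi.1 (Fin.ext h)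
    have hi₁ : (i : ℕ) ≠ j + 1 := fun h => hi.2 (Fin.ext h)
    rw [hat, max_eq_left (by linarith [one_le_abs_sub_natCast ht hi₀ hi₁]), zero_smul]

lemma Icc_piece_subset (j : Fin J) : Icc ((j : ℝ) / J) ((j + 1) / J) ⊆ Icc 0 1 :=
  Icc_subset_Icc (by positivity) (div_le_one_of_le₀ (by exact_mod_cast j.isLt) (by positivity))

lemma Ioo_piece_subset (j : Fin J) : Ioo ((j : ℝ) / J) ((j + 1) / J) ⊆ Ioo 0 1 :=
  Ioo_subset_Ioo (by positivity) (div_le_one_of_le₀ (by exact_mod_cast j.isLt) (by positivity))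

lemma exists_mem_piece (hJ : J ≠ 0) {ρ : ℝ} (hρ : ρ ∈ Icc (0 : ℝ) 1) :
    ∃ j : Fin J, ρ ∈ Icc ((j : ℝ) / J) ((j + 1) / J) := by
  have h0 : 0 ≤ ρ * J := by have := hρ.1; positivity
  have h1 : ρ * J ≤ J := mul_le_of_le_one_left (by positivity) hρ.2
  obtain ⟨k, hkJ, hk⟩ : ∃ k < J, (k : ℝ) ≤ ρ * J ∧ ρ * J ≤ k + 1 := by
    rcases lt_or_ge ⌊ρ * J⌋₊ J with h | h
    · exact ⟨_, h, Nat.floor_le h0, (Nat.lt_floor_add_one _).le⟩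
    · have : (J : ℝ) ≤ ⌊ρ * J⌋₊ := by exact_mod_cast h
      refine ⟨J - 1, by omega, ?_⟩
      rw [Nat.cast_sub (by omega), Nat.cast_one]
      constructor <;> linarith [Nat.floor_le h0]
  exact ⟨⟨k, hkJ⟩, (mem_piece_iff hJ).mpr hk⟩

def nodal (J : ℕ) (f : ℝ → E2) : Fin (J + 1) → E2 := fun i => f (i / J)

lemma nodal_interp (hJ : J ≠ 0) (u : Fin (J + 1) → E2) : nodal J (interp J u) = u := by
  have hJR : (J : ℝ) ≠ 0 := by exact_mod_cast hJ
  have hle (j : Fin J) := (natCast_div_lt_succ_div hJ j).le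
  ext1 i
  obtain ⟨j, rfl | rfl⟩ := Fin.exists_eq_castSucc_or_eq_succ hJ i
  · simp [nodal, interp_eq_on_piece hJ u j (left_mem_Icc.mpr (hle j))]
  · have h := interp_eq_on_piece hJ u j (right_mem_Icc.mpr (hle j))
    rw [pieceSlope_apply, smul_smul, show ((j + 1) / J - j / J) * (J : ℝ) = 1 by field_simp; ring,
      one_smul, add_sub_cancel] at h
    simpa [nodal] using h

lemma nodal_zero (f : ℝ → E2) : nodal J f 0 = f 0 := by simp [nodal]

lemma nodal_last (hJ : J ≠ 0) (f : ℝ → E2) : nodal J f (Fin.last J) = f 1 := by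
  simp [nodal, hJ]

lemma eqOn_interp_nodal (hJ : J ≠ 0) {per : Bool} {f : ℝ → E2} (hf : f ∈ Vh0 J per) :
    EqOn f (interp J (nodal J f)) (Icc 0 1) := by
  have hJR : (J : ℝ) ≠ 0 := by exact_mod_cast hJ
  intro ρ hρ
  obtain ⟨j, hj⟩ := exists_mem_piece hJ hρ
  obtain ⟨a, b, hab⟩ := hf.2.1 j j.isLt
  have hle := (natCast_div_lt_succ_div hJ j).le
  rw [interp_eq_on_piece hJ _ j hj, pieceSlope_apply]
  simp only [nodal, Fin.val_castSucc, Fin.val_succ, Nat.cast_add, Nat.cast_one]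
  have hslope : (J : ℝ) • (a + ((j + 1) / J : ℝ) • b - (a + ((j : ℝ) / J) • b)) = b := by
    rw [add_sub_add_left_eq_sub, ← sub_smul, smul_smul,
      show (J : ℝ) * ((j + 1) / J - j / J) = 1 by field_simp; ring, one_smul]
  rw [hab _ hj, hab _ (left_mem_Icc.mpr hle), hab _ (right_mem_Icc.mpr hle), hslope]
  module

lemma hasDerivAt_interp (hJ : J ≠ 0) (u : Fin (J + 1) → E2) (j : Fin J) {ρ : ℝ}
    (hρ : ρ ∈ Ioo ((j : ℝ) / J) ((j + 1) / J)) :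
    HasDerivAt (interp J u) (pieceSlope J j u) ρ := by
  have h : HasDerivAt (fun t : ℝ => u j.castSucc + (t - j / J) • pieceSlope J j u)
      (pieceSlope J j u) ρ := by
    simpa using (((hasDerivAt_id ρ).sub_const _).smul_const (pieceSlope J j u)).const_add
      (u j.castSucc)
  refine h.congr_of_eventuallyEq ?_
  filter_upwards [Ioo_mem_nhds hρ.1 hρ.2] with t ht
  exact interp_eq_on_piece hJ u j (Ioo_subset_Icc_self ht)

lemma deriv_eq_pieceSlope (hJ : J ≠ 0) {per : Bool} {f : ℝ → E2} (hf : f ∈ Vh0 J per)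
    (j : Fin J) {ρ : ℝ} (hρ : ρ ∈ Ioo ((j : ℝ) / J) ((j + 1) / J)) :
    deriv f ρ = pieceSlope J j (nodal J f) := by
  refine ((hasDerivAt_interp hJ _ j hρ).congr_of_eventuallyEq ?_).deriv
  filter_upwards [Ioo_mem_nhds hρ.1 hρ.2] with t ht
  exact eqOn_interp_nodal hJ hf (Icc_piece_subset j (Ioo_subset_Icc_self ht))

def bcSubmodule (J : ℕ) (per : Bool) : Submodule ℝ (Fin (J + 1) → E2) where
  carrier := {u | if per then u 0 = u (Fin.last J)
    else ⟪u 0, e1⟫ = 0 ∧ ⟪u (Fin.last J), e1⟫ = 0}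
  add_mem' := by cases per <;> simp_all [inner_add_left]
  zero_mem' := by cases per <;> simp
  smul_mem' := by cases per <;> simp_all [inner_smul_left]

lemma nodal_mem_bcSubmodule (hJ : J ≠ 0) {per : Bool} {f : ℝ → E2}
    (hf : f ∈ Vh0 J per) : nodal J f ∈ bcSubmodule J per := by
  change if per then _ else _
  rw [nodal_zero, nodal_last hJ]
  exact hf.2.2

lemma interp_mem_Vh0 (hJ : J ≠ 0) {per : Bool} {u : Fin (J + 1) → E2}
    (hu : u ∈ bcSubmodule J per) : interp J u ∈ Vh0 J per := by
  refine ⟨(continuous_interp u).continuousOn, fun j hj => ?_, ?_⟩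
  · refine ⟨u (Fin.castSucc ⟨j, hj⟩) - ((j : ℝ) / J) • pieceSlope J ⟨j, hj⟩ u,
      pieceSlope J ⟨j, hj⟩ u, fun ρ hρ => ?_⟩
    rw [interp_eq_on_piece hJ u ⟨j, hj⟩ hρ]
    module
  · rw [← nodal_zero (J := J) (interp J u), ← nodal_last hJ (interp J u), nodal_interp hJ]
    exact hu

def weight (J : ℕ) (x : Fin (J + 1) → E2) (ρ : ℝ) : ℝ := ⟪interp J x ρ, e1⟫

@[fun_prop] lemma continuous_weight (x : Fin (J + 1) → E2) : Continuous (weight J x) := by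
  unfold weight; fun_prop

def evalInterp (J : ℕ) (ρ : ℝ) : (Fin (J + 1) → E2) →ₗ[ℝ] E2 :=
  (LinearMap.proj (R := ℝ) (φ := fun _ : ℝ => E2) ρ).comp (interp J)

def localForm (J : ℕ) (Δt : ℝ) (x : Fin (J + 1) → E2) (j : Fin J) (ρ : ℝ) :
    LinearMap.BilinForm ℝ (Fin (J + 1) → E2) :=
  (weight J x ρ * Δt⁻¹ * ‖pieceSlope J j x‖ ^ 2) •
      (innerₗ E2).compl₁₂ (evalInterp J ρ) (evalInterp J ρ)
    + weight J x ρ • (innerₗ E2).compl₁₂ (pieceSlope J j) (pieceSlope J j)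

def localLoad (J : ℕ) (Δt : ℝ) (x : Fin (J + 1) → E2) (j : Fin J) (ρ : ℝ) :
    Module.Dual ℝ (Fin (J + 1) → E2) :=
  ‖pieceSlope J j x‖ ^ 2 •
    (innerₗ E2 e1 - (weight J x ρ * Δt⁻¹) • innerₗ E2 (interp J x ρ)).comp (evalInterp J ρ)

section LocalForms

variable {Δt : ℝ} {x : Fin (J + 1) → E2} {j : Fin J}

lemma localForm_apply (ρ : ℝ) (w v : Fin (J + 1) → E2) :
    localForm J Δt x j ρ w v =
      weight J x ρ * Δt⁻¹ * ‖pieceSlope J j x‖ ^ 2 * ⟪interp J w ρ, interp J v ρ⟫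
        + weight J x ρ * ⟪pieceSlope J j w, pieceSlope J j v⟫ := rfl

lemma localLoad_apply (ρ : ℝ) (v : Fin (J + 1) → E2) :
    localLoad J Δt x j ρ v = ‖pieceSlope J j x‖ ^ 2 *
      (⟪e1, interp J v ρ⟫ - weight J x ρ * Δt⁻¹ * ⟪interp J x ρ, interp J v ρ⟫) := rfl

lemma continuous_localForm_apply (w v : Fin (J + 1) → E2) :
    Continuous fun ρ => localForm J Δt x j ρ w v := by
  simp only [localForm_apply]; fun_prop

lemma continuous_localLoad_apply (v : Fin (J + 1) → E2) :
    Continuous fun ρ => localLoad J Δt x j ρ v := by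
  simp only [localLoad_apply]; fun_prop

lemma localForm_self (ρ : ℝ) (u : Fin (J + 1) → E2) :
    localForm J Δt x j ρ u u = weight J x ρ *
      (Δt⁻¹ * ‖pieceSlope J j x‖ ^ 2 * ‖interp J u ρ‖ ^ 2 + ‖pieceSlope J j u‖ ^ 2) := by
  rw [localForm_apply, real_inner_self_eq_norm_sq, real_inner_self_eq_norm_sq]
  ring

lemma localForm_self_pos (hJ : J ≠ 0) (hΔt : 0 < Δt) {ρ : ℝ}
    (hρ : ρ ∈ Icc ((j : ℝ) / J) ((j + 1) / J)) (hw : 0 < weight J x ρ)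
    (hx : pieceSlope J j x ≠ 0) {u : Fin (J + 1) → E2} (hu : u j.castSucc ≠ 0 ∨ u j.succ ≠ 0) :
    0 < localForm J Δt x j ρ u u := by
  rw [localForm_self]
  refine mul_pos hw ?_
  by_cases hs : pieceSlope J j u = 0
  · have hsucc : u j.succ = u j.castSucc := by
      simpa [pieceSlope_apply, sub_eq_zero, hJ] using hs
    have hu₀ : u j.castSucc ≠ 0 := by rwa [hsucc, or_self] at hu
    rw [interp_eq_on_piece hJ u j hρ, hs, smul_zero, add_zero, norm_zero]
    have := norm_pos_iff.mpr hx
    have := norm_pos_iff.mpr hu₀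
    positivity
  · have := norm_pos_iff.mpr hs
    positivity

end LocalForms

def schemeForm (J : ℕ) (Δt : ℝ) (x : Fin (J + 1) → E2) :
    LinearMap.BilinForm ℝ (Fin (J + 1) → E2) :=
  ∑ j : Fin J, intervalIntegralBilin (j / J) ((j + 1) / J) (localForm J Δt x j)
    fun w v => (continuous_localForm_apply w v).intervalIntegrable _ _

def schemeLoad (J : ℕ) (Δt : ℝ) (x : Fin (J + 1) → E2) : Module.Dual ℝ (Fin (J + 1) → E2) :=
  ∑ j : Fin J, intervalIntegralDual (j / J) ((j + 1) / J) (localLoad J Δt x j)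
    fun v => (continuous_localLoad_apply v).intervalIntegrable _ _

section SchemeForms

variable {Δt : ℝ} {x : Fin (J + 1) → E2}

lemma schemeForm_apply (w v : Fin (J + 1) → E2) :
    schemeForm J Δt x w v =
      ∑ j : Fin J, ∫ ρ in (j / J : ℝ)..((j + 1) / J), localForm J Δt x j ρ w v := by
  simp only [schemeForm, LinearMap.sum_apply, intervalIntegralBilin_apply]

lemma schemeLoad_apply (v : Fin (J + 1) → E2) :
    schemeLoad J Δt x v =
      ∑ j : Fin J, ∫ ρ in (j / J : ℝ)..((j + 1) / J), localLoad J Δt x j ρ v := by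
  simp only [schemeLoad, LinearMap.sum_apply, intervalIntegralDual_apply]

lemma schemeForm_self_pos (hJ : J ≠ 0) (hΔt : 0 < Δt)
    (hw : ∀ j : Fin J, ∀ ρ ∈ Ioo ((j : ℝ) / J) ((j + 1) / J), 0 < weight J x ρ)
    (hx : ∀ j, pieceSlope J j x ≠ 0) {u : Fin (J + 1) → E2} (hu : u ≠ 0) :
    0 < schemeForm J Δt x u u := by
  have hpos (j : Fin J) (hj : u j.castSucc ≠ 0 ∨ u j.succ ≠ 0) :
      0 < ∫ ρ in (j / J : ℝ)..((j + 1) / J), localForm J Δt x j ρ u u :=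
    intervalIntegral.intervalIntegral_pos_of_pos_on
      ((continuous_localForm_apply u u).intervalIntegrable _ _)
      (fun ρ hρ => localForm_self_pos hJ hΔt (Ioo_subset_Icc_self hρ) (hw j ρ hρ) (hx j) hj)
      (natCast_div_lt_succ_div hJ j)
  have hnonneg (j : Fin J) : 0 ≤ ∫ ρ in (j / J : ℝ)..((j + 1) / J), localForm J Δt x j ρ u u := by
    by_cases hj : u j.castSucc ≠ 0 ∨ u j.succ ≠ 0
    · exact (hpos j hj).le
    · push Not at hj
      refine intervalIntegral.integral_nonneg (natCast_div_lt_succ_div hJ j).le fun ρ hρ => ?_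
      rw [localForm_self, interp_eq_on_piece hJ u j hρ]
      simp [pieceSlope_apply, hj.1, hj.2]
  obtain ⟨j, hj⟩ : ∃ j : Fin J, u j.castSucc ≠ 0 ∨ u j.succ ≠ 0 := by
    obtain ⟨i, hi⟩ := Function.ne_iff.mp hu
    obtain ⟨j, rfl | rfl⟩ := Fin.exists_eq_castSucc_or_eq_succ hJ i
    exacts [⟨j, Or.inl hi⟩, ⟨j, Or.inr hi⟩]
  rw [schemeForm_apply]
  exact (hpos j hj).trans_le (Finset.single_le_sum (fun k _ => hnonneg k) (Finset.mem_univ j))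

end SchemeForms

lemma Bform_eq_schemeForm_add_schemeLoad (hJ : J ≠ 0) {per : Bool} {Δt : ℝ}
    {Xm Y η : ℝ → E2} (hXm : Xm ∈ Vh0 J per) (hY : Y ∈ Vh0 J per) (hη : η ∈ Vh0 J per) :
    Bform Δt Xm Y η = schemeForm J Δt (nodal J Xm) (nodal J Y) (nodal J η)
      + schemeLoad J Δt (nodal J Xm) (nodal J η) := by
  rw [Bform, schemeForm_apply, schemeLoad_apply, ← Finset.sum_add_distrib]
  rw [integral_unitInterval_eq_sum_pieces hJ (g := fun j ρ =>
    localForm J Δt (nodal J Xm) j ρ (nodal J Y) (nodal J η)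
      + localLoad J Δt (nodal J Xm) j ρ (nodal J η))]
  · exact Finset.sum_congr rfl fun j _ => intervalIntegral.integral_add
      ((continuous_localForm_apply _ _).intervalIntegrable _ _)
      ((continuous_localLoad_apply _).intervalIntegrable _ _)
  · exact fun j => ((continuous_localForm_apply _ _).add
      (continuous_localLoad_apply _)).intervalIntegrable _ _
  · intro j ρ hρ
    have hρ01 := Icc_piece_subset j (Ioo_subset_Icc_self hρ)
    simp only [localForm_apply, localLoad_apply, weight]
    rw [deriv_eq_pieceSlope hJ hXm j hρ, deriv_eq_pieceSlope hJ hY j hρ,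
      deriv_eq_pieceSlope hJ hη j hρ, ← eqOn_interp_nodal hJ hXm hρ01,
      ← eqOn_interp_nodal hJ hY hρ01, ← eqOn_interp_nodal hJ hη hρ01,
      real_inner_smul_left, inner_sub_left, real_inner_comm (η ρ) e1]
    ring

lemma forall_Bform_eq_zero_iff (hJ : J ≠ 0) {per : Bool} {Δt : ℝ} {Xm Y : ℝ → E2}
    (hXm : Xm ∈ Vh0 J per) (hY : Y ∈ Vh0 J per) :
    (∀ η ∈ Vh0 J per, Bform Δt Xm Y η = 0) ↔ ∀ v ∈ bcSubmodule J per,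
      schemeForm J Δt (nodal J Xm) (nodal J Y) v + schemeLoad J Δt (nodal J Xm) v = 0 := by
  refine ⟨fun h v hv => ?_, fun h η hη => ?_⟩
  · rw [← h _ (interp_mem_Vh0 hJ hv),
      Bform_eq_schemeForm_add_schemeLoad hJ hXm hY (interp_mem_Vh0 hJ hv), nodal_interp hJ]
  · rw [Bform_eq_schemeForm_add_schemeLoad hJ hXm hY hη]
    exact h _ (nodal_mem_bcSubmodule hJ hη)

lemma weight_nodal_pos (hJ : J ≠ 0) {per : Bool} {f : ℝ → E2} (hf : f ∈ Vh0 J per)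
    (hpos : ∀ ρ ∈ Ioo (0 : ℝ) 1, 0 < ⟪f ρ, e1⟫) (j : Fin J) :
    ∀ ρ ∈ Ioo ((j : ℝ) / J) ((j + 1) / J), 0 < weight J (nodal J f) ρ := by
  intro ρ hρ
  have hρ01 := Ioo_piece_subset j hρ
  rw [weight, ← eqOn_interp_nodal hJ hf (Ioo_subset_Icc_self hρ01)]
  exact hpos ρ hρ01

lemma pieceSlope_nodal_ne_zero (hJ : J ≠ 0) {per : Bool} {f : ℝ → E2} (hf : f ∈ Vh0 J per)
    (j : Fin J) (hderiv : ∀ ρ ∈ Ioo ((j : ℝ) / J) ((j + 1) / J), deriv f ρ ≠ 0) :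
    pieceSlope J j (nodal J f) ≠ 0 := by
  have hlt := natCast_div_lt_succ_div hJ j
  have hmid : ((j : ℝ) / J + (j + 1) / J) / 2 ∈ Ioo ((j : ℝ) / J) ((j + 1) / J) :=
    ⟨by linarith, by linarith⟩
  rw [← deriv_eq_pieceSlope hJ hf j hmid]
  exact hderiv _ hmid

end P1

open P1 in
/-- Lemma 2.1: if `X^m ∈ V^h_{∂0}` satisfies `X^m·e₁ > 0` and `|X^m_ρ| > 0` in `I`
(the derivative taken piecewise), then there is a unique `X^{m+1} ∈ V^h_{∂0}` solving
the linear scheme; uniqueness is as functions on `Ī = [0,1]`. -/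
theorem one_step_existence_uniqueness
    (J : ℕ) (hJ : 3 ≤ J) (periodic : Bool) (Δt : ℝ) (hΔt : 0 < Δt)
    (Xm : ℝ → E2) (hXm : Xm ∈ Vh0 J periodic)
    (hpos : ∀ ρ ∈ (if periodic then Set.Icc (0:ℝ) 1 else Set.Ioo (0:ℝ) 1),
      0 < ⟪Xm ρ, e1⟫)
    (hderiv : ∀ j : ℕ, j < J → ∀ ρ ∈ Set.Ioo ((j : ℝ)/J) (((j : ℝ)+1)/J),
      deriv Xm ρ ≠ 0) :
    ∃ Xnew ∈ Vh0 J periodic,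
      (∀ η ∈ Vh0 J periodic, Bform Δt Xm Xnew η = 0) ∧
      ∀ Y ∈ Vh0 J periodic, (∀ η ∈ Vh0 J periodic, Bform Δt Xm Y η = 0) →
        ∀ ρ ∈ Set.Icc (0:ℝ) 1, Y ρ = Xnew ρ := by
  have hJ0 : J ≠ 0 := by omega
  have hw := weight_nodal_pos hJ0 hXm fun ρ hρ =>
    hpos ρ (by cases periodic <;> simp [hρ, Ioo_subset_Icc_self hρ])
  have hx (j : Fin J) := pieceSlope_nodal_ne_zero hJ0 hXm j (hderiv j j.isLt)
  obtain ⟨w, hw_sol, hw_uniq⟩ :=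
    ((schemeForm J Δt (nodal J Xm)).restrict (bcSubmodule J periodic)).existsUnique_apply_eq
      (fun v hv => by
        by_contra hv0
        exact (schemeForm_self_pos hJ0 hΔt hw hx (by simpa using hv0)).ne' hv)
      (-(schemeLoad J Δt (nodal J Xm)).domRestrict (bcSubmodule J periodic))
  have hXnew := interp_mem_Vh0 hJ0 w.2
  refine ⟨interp J w, hXnew, (forall_Bform_eq_zero_iff hJ0 hXm hXnew).mpr fun v hv => ?_,
    fun Y hY hYsol ρ hρ => ?_⟩
  · rw [nodal_interp hJ0]
    exact eq_neg_iff_add_eq_zero.mp (hw_sol ⟨v, hv⟩)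
  · have hYw : (⟨nodal J Y, nodal_mem_bcSubmodule hJ0 hY⟩ : bcSubmodule J periodic) = w :=
      hw_uniq _ fun v => eq_neg_iff_add_eq_zero.mpr
        ((forall_Bform_eq_zero_iff hJ0 hXm hY).mp hYsol v v.2)
    rw [eqOn_interp_nodal hJ0 hY hρ, ← hYw]
end
end

section
/- (Energy identity for the first formulation.) Let I = ℝ/ℤ, T > 0, and let x : I × [0,T] → ℝ² be such that x, x_ρ, x_ρρ, x_t and x_tρ exist and are continuous, and x solves (★) on I × [0,T]. Then for every t ∈ [0,T], (d/dt) ∫₀¹ (x·e₁) |x_ρ|² dρ = −2 ∫₀¹ (x·e₁) |x_t|² |x_ρ|² dρ − ∫₀¹ (x_t·e₁) |x_ρ|² dρ. -/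
/-! Differentiating under the integral sign (Fubini plus the fundamental theorem of calculus in
time), the energy changes at the rate `∫ (x_t·e₁)|x_ρ|² + 2 (x·e₁)⟨x_ρ, x_tρ⟩`. Dotting (★) with
`x_t` rewrites this integrand as `2 ∂_ρ[(x·e₁)⟨x_ρ, x_t⟩] − 2 (x·e₁)|x_t|²|x_ρ|² − (x_t·e₁)|x_ρ|²`,
and the flux `(x·e₁)⟨x_ρ, x_t⟩` is 1-periodic, so its derivative integrates to zero. Here
`∂_ρ x_t = x_tρ` is needed, i.e. that the mixed partials commute; it follows by differentiating
`x(ρ) − x(0) = ∫₀^ρ x_ρ` in time. -/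

open MeasureTheory Real Set
open scoped RealInnerProductSpace

noncomputable section

theorem ContinuousOn.continuous_slice {X Y Z : Type*} [TopologicalSpace X] [TopologicalSpace Y]
    [TopologicalSpace Z] {f : X → Y → Z} {s : Set Y}
    (hf : ContinuousOn (fun p : X × Y => f p.1 p.2) (univ ×ˢ s)) {t : Y} (ht : t ∈ s) :
    Continuous (fun x => f x t) :=
  hf.comp_continuous (continuous_id.prodMk continuous_const) fun _ => ⟨trivial, ht⟩

section Calculus

variable {E : Type*} [NormedAddCommGroup E] [NormedSpace ℝ E]

theorem Function.Periodic.hasDerivAt_add {f : ℝ → E} {f' : E} {c x : ℝ}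
    (hf : Function.Periodic f c) (h : HasDerivAt f f' x) : HasDerivAt f f' (x + c) := by
  have h' : HasDerivAt (fun y => f (y - c)) f' (x + c) :=
    HasDerivAt.comp_sub_const _ _ (by rwa [add_sub_cancel_right])
  simpa only [hf.sub_eq] using h'

theorem intervalIntegral_integral_swap_of_continuous {f : ℝ → ℝ → E}
    (hf : Continuous (Function.uncurry f)) (a b c d : ℝ) :
    ∫ r in a..b, ∫ s in c..d, f r s = ∫ s in c..d, ∫ r in a..b, f r s := by
  simp only [intervalIntegral.intervalIntegral_eq_integral_uIoc, integral_smul]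
  rw [integral_integral_swap, smul_comm]
  rw [Measure.prod_restrict]
  exact (hf.continuousOn.integrableOn_compact (isCompact_uIcc.prod isCompact_uIcc)).mono_set
    (prod_mono uIoc_subset_uIcc uIoc_subset_uIcc)

variable [CompleteSpace E]

theorem integral_eq_sub_of_hasDerivWithinAt_Icc {f f' : ℝ → E} {a b τ : ℝ}
    (hf : ∀ t ∈ Icc a b, HasDerivWithinAt f (f' t) (Icc a b) t)
    (hf' : ContinuousOn f' (Icc a b)) (hτ : τ ∈ Icc a b) :
    ∫ t in a..τ, f' t = f τ - f a := by
  have hsub : Icc a τ ⊆ Icc a b := Icc_subset_Icc_right hτ.2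
  refine intervalIntegral.integral_eq_sub_of_hasDerivAt_of_le hτ.1
    (fun t ht => (hf t (hsub ht)).continuousWithinAt.mono hsub) (fun t ht => ?_)
    ((hf'.mono hsub).intervalIntegrable_of_Icc hτ.1)
  exact (hf t (hsub (Ioo_subset_Icc_self ht))).hasDerivAt
    (Icc_mem_nhds ht.1 (ht.2.trans_le hτ.2))

theorem hasDerivWithinAt_intervalIntegral_of_continuousOn {F F' : ℝ → ℝ → E} {a b : ℝ}
    (hF : ContinuousOn (fun p : ℝ × ℝ => F p.1 p.2) (univ ×ˢ Icc a b))
    (hF' : ContinuousOn (fun p : ℝ × ℝ => F' p.1 p.2) (univ ×ˢ Icc a b))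
    (hderiv : ∀ ρ, ∀ t ∈ Icc a b, HasDerivWithinAt (F ρ) (F' ρ t) (Icc a b) t)
    (α β : ℝ) {t : ℝ} (ht : t ∈ Icc a b) :
    HasDerivWithinAt (fun τ => ∫ ρ in α..β, F ρ τ) (∫ ρ in α..β, F' ρ t) (Icc a b) t := by
  have hab : a ≤ b := ht.1.trans ht.2
  -- clamping time to `[a, b]` makes `F'` continuous on the whole plane
  set c : ℝ → ℝ := fun τ => projIcc a b hab τ
  have hc_eq : ∀ τ ∈ Icc a b, c τ = τ := fun τ hτ => congrArg Subtype.val (projIcc_of_mem hab hτ)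
  have hc : Continuous c := continuous_subtype_val.comp (continuous_projIcc (h := hab))
  have hF'c : Continuous (fun p : ℝ × ℝ => F' p.1 (c p.2)) :=
    hF'.comp_continuous (continuous_fst.prodMk (hc.comp continuous_snd))
      fun p => ⟨trivial, (projIcc a b hab p.2).2⟩
  set H : ℝ → E := fun s => ∫ ρ in α..β, F' ρ (c s)
  have hH : Continuous H :=
    intervalIntegral.continuous_parametric_intervalIntegral_of_continuous'
      (f := fun s ρ => F' ρ (c s)) (hF'c.comp continuous_swap) α β
  have hG : ∀ τ ∈ Icc a b, ∫ ρ in α..β, F ρ τ = (∫ ρ in α..β, F ρ a) + ∫ s in a..τ, H s := by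
    intro τ hτ
    have hslice : ∀ ρ, ∫ s in a..τ, F' ρ (c s) = F ρ τ - F ρ a := fun ρ => by
      rw [← integral_eq_sub_of_hasDerivWithinAt_Icc (hderiv ρ)
        (hF'.comp (continuousOn_const.prodMk continuousOn_id) fun _ hs => ⟨trivial, hs⟩) hτ]
      refine intervalIntegral.integral_congr fun s hs => ?_
      rw [hc_eq s (uIcc_subset_Icc (left_mem_Icc.2 hab) hτ hs)]
    simp only [H]
    rw [← intervalIntegral_integral_swap_of_continuous (f := fun ρ s => F' ρ (c s)) hF'c,
      intervalIntegral.integral_congr fun ρ _ => hslice ρ, intervalIntegral.integral_sub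
        ((hF.continuous_slice hτ).intervalIntegrable α β)
        ((hF.continuous_slice (left_mem_Icc.2 hab)).intervalIntegrable α β),
      add_sub_cancel]
  have hG' := ((hH.integral_hasStrictDerivAt a t).hasDerivAt.hasDerivWithinAt
    (s := Icc a b)).const_add (∫ ρ in α..β, F ρ a)
  simpa only [H, hc_eq t ht] using hG'.congr hG (hG t ht)

theorem hasDerivAt_mixed_partial_comm {x xρ xt xtρ : ℝ → ℝ → E} {a b : ℝ} (hab : a < b)
    (hdρ : ∀ ρ, ∀ t ∈ Icc a b, HasDerivAt (fun s => x s t) (xρ ρ t) ρ)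
    (hdt : ∀ ρ, ∀ t ∈ Icc a b, HasDerivWithinAt (x ρ) (xt ρ t) (Icc a b) t)
    (hdtρ : ∀ ρ, ∀ t ∈ Icc a b, HasDerivWithinAt (xρ ρ) (xtρ ρ t) (Icc a b) t)
    (hcontρ : ContinuousOn (fun p : ℝ × ℝ => xρ p.1 p.2) (univ ×ˢ Icc a b))
    (hconttρ : ContinuousOn (fun p : ℝ × ℝ => xtρ p.1 p.2) (univ ×ˢ Icc a b))
    {t : ℝ} (ht : t ∈ Icc a b) (ρ : ℝ) :
    HasDerivAt (fun s => xt s t) (xtρ ρ t) ρ := by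
  have hxρ_int : ∀ σ, ∀ τ ∈ Icc a b, ∫ r in (0 : ℝ)..σ, xρ r τ = x σ τ - x 0 τ := fun σ τ hτ =>
    intervalIntegral.integral_eq_sub_of_hasDerivAt (fun r _ => hdρ r τ hτ)
      ((hcontρ.continuous_slice hτ).intervalIntegrable 0 σ)
  have hxt_eq : ∀ σ, xt σ t = xt 0 t + ∫ r in (0 : ℝ)..σ, xtρ r t := fun σ => by
    have hleibniz := hasDerivWithinAt_intervalIntegral_of_continuousOn hcontρ hconttρ hdtρ 0 σ ht
    have hdiff := ((hdt σ t ht).sub (hdt 0 t ht)).congr (fun τ hτ => hxρ_int σ τ hτ)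
      (hxρ_int σ t ht)
    rw [(uniqueDiffOn_Icc hab t ht).eq_deriv _ hleibniz hdiff, add_sub_cancel]
  rw [funext hxt_eq]
  exact ((hconttρ.continuous_slice ht).integral_hasStrictDerivAt 0 ρ).hasDerivAt.const_add _

end Calculus

section InnerProductSpace

variable {V : Type*} [NormedAddCommGroup V] [InnerProductSpace ℝ V]

theorem energy_rate_eq_of_pde {X Xρ Xρρ Xt Xtρ e : V}
    (hpde : (⟪X, e⟫ * ‖Xρ‖ ^ 2) • Xt - (⟪Xρ, e⟫ • Xρ + ⟪X, e⟫ • Xρρ) + ‖Xρ‖ ^ 2 • e = 0) :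
    ⟪Xt, e⟫ * ‖Xρ‖ ^ 2 + ⟪X, e⟫ * (2 * ⟪Xρ, Xtρ⟫)
      = 2 * (⟪Xρ, e⟫ * ⟪Xρ, Xt⟫ + ⟪X, e⟫ * (⟪Xρ, Xtρ⟫ + ⟪Xρρ, Xt⟫))
        - (2 * (⟪X, e⟫ * ‖Xt‖ ^ 2 * ‖Xρ‖ ^ 2) + ⟪Xt, e⟫ * ‖Xρ‖ ^ 2) := by
  have h := congrArg (fun v => ⟪v, Xt⟫) hpde
  simp only [inner_sub_left, inner_add_left, real_inner_smul_left, inner_zero_left,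
    real_inner_self_eq_norm_sq] at h
  rw [real_inner_comm Xt e] at h
  linear_combination 2 * h

theorem hasDerivWithinAt_integral_inner_mul_norm_sq {x xρ xt xtρ : ℝ → ℝ → V} {e : V} {a b : ℝ}
    (hdt : ∀ ρ, ∀ t ∈ Icc a b, HasDerivWithinAt (x ρ) (xt ρ t) (Icc a b) t)
    (hdtρ : ∀ ρ, ∀ t ∈ Icc a b, HasDerivWithinAt (xρ ρ) (xtρ ρ t) (Icc a b) t)
    (hcont : ContinuousOn (fun p : ℝ × ℝ => x p.1 p.2) (univ ×ˢ Icc a b))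
    (hcontρ : ContinuousOn (fun p : ℝ × ℝ => xρ p.1 p.2) (univ ×ˢ Icc a b))
    (hcontt : ContinuousOn (fun p : ℝ × ℝ => xt p.1 p.2) (univ ×ˢ Icc a b))
    (hconttρ : ContinuousOn (fun p : ℝ × ℝ => xtρ p.1 p.2) (univ ×ˢ Icc a b))
    (α β : ℝ) {t : ℝ} (ht : t ∈ Icc a b) :
    HasDerivWithinAt (fun τ => ∫ ρ in α..β, ⟪x ρ τ, e⟫ * ‖xρ ρ τ‖ ^ 2)
      (∫ ρ in α..β, ⟪xt ρ t, e⟫ * ‖xρ ρ t‖ ^ 2 + ⟪x ρ t, e⟫ * (2 * ⟪xρ ρ t, xtρ ρ t⟫))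
      (Icc a b) t :=
  hasDerivWithinAt_intervalIntegral_of_continuousOn
    ((hcont.inner continuousOn_const).mul (hcontρ.norm.pow 2))
    (((hcontt.inner continuousOn_const).mul (hcontρ.norm.pow 2)).add
      ((hcont.inner continuousOn_const).mul (continuousOn_const.mul (hcontρ.inner hconttρ))))
    (fun ρ τ hτ => by
      simpa only [inner_zero_right, zero_add] using
        ((hdt ρ τ hτ).inner ℝ (hasDerivWithinAt_const τ _ e)).fun_mul (hdtρ ρ τ hτ).norm_sq)
    α β ht

theorem integral_deriv_inner_mul_inner_eq_zero {X Xρ Xρρ Xt Xtρ : ℝ → V} {e : V} {α β : ℝ}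
    (hX : ∀ ρ, HasDerivAt X (Xρ ρ) ρ) (hXρ : ∀ ρ, HasDerivAt Xρ (Xρρ ρ) ρ)
    (hXt : ∀ ρ, HasDerivAt Xt (Xtρ ρ) ρ) (hXρρ_cont : Continuous Xρρ)
    (hXtρ_cont : Continuous Xtρ) (hX_per : X β = X α) (hXρ_per : Xρ β = Xρ α)
    (hXt_per : Xt β = Xt α) :
    ∫ ρ in α..β, (⟪Xρ ρ, e⟫ * ⟪Xρ ρ, Xt ρ⟫ + ⟪X ρ, e⟫ * (⟪Xρ ρ, Xtρ ρ⟫ + ⟪Xρρ ρ, Xt ρ⟫))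
      = 0 := by
  have hX_cont : Continuous X := continuous_iff_continuousAt.2 fun ρ => (hX ρ).continuousAt
  have hXρ_cont : Continuous Xρ := continuous_iff_continuousAt.2 fun ρ => (hXρ ρ).continuousAt
  have hXt_cont : Continuous Xt := continuous_iff_continuousAt.2 fun ρ => (hXt ρ).continuousAt
  rw [intervalIntegral.integral_eq_sub_of_hasDerivAt (f := fun ρ => ⟪X ρ, e⟫ * ⟪Xρ ρ, Xt ρ⟫)
    (fun ρ _ => by simpa only [inner_zero_right, zero_add] using
      ((hX ρ).inner ℝ (hasDerivAt_const ρ e)).fun_mul ((hXρ ρ).inner ℝ (hXt ρ)))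
    (Continuous.intervalIntegrable (by fun_prop) α β), hX_per, hXρ_per, hXt_per, sub_self]

end InnerProductSpace

theorem energy_identity_first_formulation
    (T : ℝ) (hT : 0 < T)
    (x xρ xρρ xt xtρ : ℝ → ℝ → E2)
    -- periodicity: functions on I = ℝ/ℤ are 1-periodic
    (hper : ∀ ρ t, x (ρ + 1) t = x ρ t)
    -- existence of the derivatives x_ρ, x_ρρ, x_t and x_tρ = (x_ρ)_t
    (hdρ : ∀ (ρ : ℝ), ∀ t ∈ Set.Icc (0:ℝ) T, HasDerivAt (fun s => x s t) (xρ ρ t) ρ)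
    (hdρρ : ∀ (ρ : ℝ), ∀ t ∈ Set.Icc (0:ℝ) T, HasDerivAt (fun s => xρ s t) (xρρ ρ t) ρ)
    (hdt : ∀ (ρ : ℝ), ∀ t ∈ Set.Icc (0:ℝ) T,
      HasDerivWithinAt (fun τ => x ρ τ) (xt ρ t) (Set.Icc 0 T) t)
    (hdtρ : ∀ (ρ : ℝ), ∀ t ∈ Set.Icc (0:ℝ) T,
      HasDerivWithinAt (fun τ => xρ ρ τ) (xtρ ρ t) (Set.Icc 0 T) t)
    -- continuity of x, x_ρ, x_ρρ, x_t, x_tρ on I × [0,T]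
    (hcont : ContinuousOn (fun p : ℝ × ℝ => x p.1 p.2) (Set.univ ×ˢ Set.Icc 0 T))
    (hcontρ : ContinuousOn (fun p : ℝ × ℝ => xρ p.1 p.2) (Set.univ ×ˢ Set.Icc 0 T))
    (hcontρρ : ContinuousOn (fun p : ℝ × ℝ => xρρ p.1 p.2) (Set.univ ×ˢ Set.Icc 0 T))
    (hcontt : ContinuousOn (fun p : ℝ × ℝ => xt p.1 p.2) (Set.univ ×ˢ Set.Icc 0 T))
    (hconttρ : ContinuousOn (fun p : ℝ × ℝ => xtρ p.1 p.2) (Set.univ ×ˢ Set.Icc 0 T))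
    -- x solves (★): (x·e₁)|x_ρ|² x_t − ((x·e₁) x_ρ)_ρ + |x_ρ|² e₁ = 0
    (hpde : ∀ (ρ : ℝ), ∀ t ∈ Set.Icc (0:ℝ) T,
      (⟪x ρ t, e1⟫ * ‖xρ ρ t‖^2) • xt ρ t
        - (⟪xρ ρ t, e1⟫ • xρ ρ t + ⟪x ρ t, e1⟫ • xρρ ρ t)
        + ‖xρ ρ t‖^2 • e1 = 0) :
    ∀ t ∈ Set.Icc (0:ℝ) T,
      HasDerivWithinAt (fun τ => ∫ ρ in (0:ℝ)..1, ⟪x ρ τ, e1⟫ * ‖xρ ρ τ‖^2)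
        (-2 * (∫ ρ in (0:ℝ)..1, ⟪x ρ t, e1⟫ * ‖xt ρ t‖^2 * ‖xρ ρ t‖^2)
          - ∫ ρ in (0:ℝ)..1, ⟪xt ρ t, e1⟫ * ‖xρ ρ t‖^2)
        (Set.Icc 0 T) t := by
  intro t ht
  have hxtρ := hasDerivAt_mixed_partial_comm hT hdρ hdt hdtρ hcontρ hconttρ ht
  have hxρ_one : xρ 1 t = xρ 0 t := by
    have hperiodic : Function.Periodic (fun s => x s t) 1 := fun s => hper s t
    exact (hdρ 1 t ht).unique (by simpa using hperiodic.hasDerivAt_add (hdρ 0 t ht))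
  have hxt_one : xt 1 t = xt 0 t := by
    have hx_one : (fun τ => x 1 τ) = fun τ => x 0 τ := funext fun τ => by simpa using hper 0 τ
    exact (uniqueDiffOn_Icc hT t ht).eq_deriv _ (hdt 1 t ht) (hx_one ▸ hdt 0 t ht)
  have cx := hcont.continuous_slice ht
  have cxρ := hcontρ.continuous_slice ht
  have cxρρ := hcontρρ.continuous_slice ht
  have cxt := hcontt.continuous_slice ht
  have cxtρ := hconttρ.continuous_slice ht
  have hflux := integral_deriv_inner_mul_inner_eq_zero (e := e1) (fun ρ => hdρ ρ t ht)
    (fun ρ => hdρρ ρ t ht) hxtρ cxρρ cxtρ (by simpa using hper 0 t) hxρ_one hxt_one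
  refine (hasDerivWithinAt_integral_inner_mul_norm_sq hdt hdtρ hcont hcontρ hcontt hconttρ
    0 1 ht).congr_deriv ?_
  rw [intervalIntegral.integral_congr fun ρ _ => energy_rate_eq_of_pde (hpde ρ t ht),
    intervalIntegral.integral_sub, intervalIntegral.integral_const_mul, hflux,
    intervalIntegral.integral_add, intervalIntegral.integral_const_mul]
  · ring
  all_goals exact Continuous.intervalIntegrable (by fun_prop) 0 1
end
end
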